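/- For any fixed real number r0 > 0 there exists a natural number M1 (depending on r0) such that for every integer m ≥ M1 one has √(2m+3) · r0^{−3/2} ≥ (r0^{−1/2} · J_{m+1/2}(r0)) / √(∫_0^{r0} J_{m+1/2}(r)² · r dr) > (1/2) · √(2m+3) · r0^{−3/2}, where J_α is the Bessel function of the first kind defined by its power series. -/
import Mathlib

lemma alt_summable (u : ℕ → ℝ) (hpos : ∀ k, 0 ≤ u k) (hsum : Summable u) :
    Summable (fun k => (-1 : ℝ)^k * u k) := by
  apply Summable.of_abs
  refine hsum.congr fun k => ?_
  rw [abs_mul, abs_pow, abs_neg, abs_one, one_pow, one_mul, abs_of_nonneg (hpos k)]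

lemma alt_pair (u : ℕ → ℝ) (hpos : ∀ k, 0 ≤ u k) (hdec : ∀ k, u (k+1) ≤ u k)
    (hsum : Summable u) :
    u 0 - u 1 ≤ ∑' k, (-1 : ℝ)^k * u k ∧ (∑' k, (-1 : ℝ)^k * u k) ≤ u 0 := by
  set t : ℕ → ℝ := fun k => (-1 : ℝ)^k * u k with ht
  have hteven : ∀ i : ℕ, t (2*i) = u (2*i) := by
    intro i; simp [ht, pow_mul]
  have htodd : ∀ i : ℕ, t (2*i+1) = -u (2*i+1) := by
    intro i; simp [ht, pow_succ, pow_mul]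
  have htodd2 : ∀ i : ℕ, t (2*i+2) = u (2*i+2) := by
    intro i
    have : 2*i+2 = 2*(i+1) := by ring
    rw [this, hteven]
  have hts : Summable t := alt_summable u hpos hsum
  have hte : Summable (fun k => t (2*k)) := hts.comp_injective (fun a b h => by omega)
  have hto : Summable (fun k => t (2*k+1)) := hts.comp_injective (fun a b h => by omega)
  have hts1 : Summable (fun k => t (k+1)) := (summable_nat_add_iff 1).2 hts
  have hto1 : Summable (fun k => t (2*k+2)) :=
    hts.comp_injective (i := fun k : ℕ => 2*k+2) (fun a b h => by simp only [] at h; omega)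
  constructor
  · -- lower bound
    have key : ∑' k, t k = ∑' k, (t (2*k) + t (2*k+1)) := by
      rw [Summable.tsum_add hte hto, tsum_even_add_odd hte hto]
    rw [key]
    have hpair : Summable (fun k => t (2*k) + t (2*k+1)) := hte.add hto
    have h0 : (fun k => t (2*k) + t (2*k+1)) 0 = u 0 - u 1 := by
      simp only [Nat.mul_zero, Nat.zero_add, hteven 0, htodd 0]; ring
    rw [← h0]
    apply Summable.le_tsum hpair 0
    intro j hj
    obtain ⟨i, rfl⟩ : ∃ i, j = i + 1 := ⟨j - 1, by omega⟩
    have e : t (2*(i+1)) + t (2*(i+1)+1) = u (2*i+2) - u (2*i+3) := by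
      rw [show 2*(i+1) = 2*i+2 by ring, htodd2 i,
        show 2*i+2+1 = 2*(i+1)+1 by ring, htodd (i+1),
        show 2*(i+1)+1 = 2*i+3 by ring]
      ring
    simp only [e]
    have := hdec (2*i+2)
    linarith
  · -- upper bound
    rw [Summable.tsum_eq_zero_add hts]
    have h0 : t 0 = u 0 := by simp [ht]
    rw [h0]
    have key : ∑' k, t (k+1) = ∑' k, (t (2*k+1) + t (2*k+2)) := by
      rw [Summable.tsum_add hto hto1]
      have heq1 : (fun k : ℕ => t (2*k+1)) = (fun k : ℕ => (fun n => t (n+1)) (2*k)) := by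
        funext k; rfl
      have heq2 : (fun k : ℕ => t (2*k+2)) = (fun k : ℕ => (fun n => t (n+1)) (2*k+1)) := by
        funext k; rfl
      have := tsum_even_add_odd (f := fun n => t (n+1))
        (by rw [← heq1]; exact hto) (by rw [← heq2]; exact hto1)
      rw [heq1, heq2, this]
    rw [key]
    have hpair : Summable (fun k => t (2*k+1) + t (2*k+2)) := hto.add hto1
    have : ∑' k, (t (2*k+1) + t (2*k+2)) ≤ 0 := by
      apply tsum_nonpos
      intro i
      rw [htodd i, htodd2 i]
      have := hdec (2*i+1)
      linarith
    linarith

open Real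

noncomputable def besselJ (α : ℝ) (x : ℝ) : ℝ :=
  ∑' k : ℕ,
    ((-1 : ℝ) ^ k / ((Nat.factorial k : ℝ) * Real.Gamma ((k : ℝ) + α + 1))) *
      (x / 2) ^ (2 * (k : ℝ) + α)

noncomputable def bU (ν x : ℝ) (k : ℕ) : ℝ :=
  (x / 2) ^ (2 * (k : ℝ) + ν) / ((Nat.factorial k : ℝ) * Real.Gamma ((k : ℝ) + ν + 1))

lemma gamma_pos (ν : ℝ) (hν : 0 ≤ ν) (k : ℕ) : 0 < Real.Gamma ((k : ℝ) + ν + 1) := by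
  apply Real.Gamma_pos_of_pos
  positivity

lemma bU_nonneg (ν x : ℝ) (hν : 0 ≤ ν) (hx : 0 ≤ x) (k : ℕ) : 0 ≤ bU ν x k := by
  unfold bU
  have := gamma_pos ν hν k
  have : (0:ℝ) ≤ (x/2) ^ (2 * (k:ℝ) + ν) := Real.rpow_nonneg (by linarith) _
  positivity

lemma besselJ_eq (ν x : ℝ) : besselJ ν x = ∑' k, (-1 : ℝ)^k * bU ν x k := by
  unfold besselJ bU
  exact tsum_congr fun k => by ring

lemma bU_succ (ν x : ℝ) (hν : 0 ≤ ν) (hx : 0 < x) (k : ℕ) :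
    bU ν x (k+1) = bU ν x k * ((x/2)^2 / (((k:ℝ)+1) * ((k:ℝ) + ν + 1))) := by
  unfold bU
  have hΓ := gamma_pos ν hν k
  have hΓne : ((k:ℝ) + ν + 1) ≠ 0 := by positivity
  have hrw : (2 * ((k:ℝ)+1) + ν) = (2 * (k:ℝ) + ν) + 2 := by ring
  have hx2 : (0:ℝ) < x / 2 := by linarith
  push_cast
  rw [hrw, Real.rpow_add hx2, show ((x/2):ℝ) ^ (2:ℝ) = (x/2)^2 by
    rw [show (2:ℝ) = ((2:ℕ):ℝ) by norm_num, Real.rpow_natCast],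
    Nat.factorial_succ, show ((k:ℝ) + 1 + ν + 1) = ((k:ℝ) + ν + 1) + 1 by ring,
    Real.Gamma_add_one hΓne]
  push_cast
  field_simp

lemma bU_half (ν x r0 : ℝ) (hν : 0 ≤ ν) (hx : 0 < x) (hxr : x ≤ r0)
    (hbig : r0^2 ≤ ν + 1) (k : ℕ) :
    bU ν x (k+1) ≤ bU ν x k / 2 := by
  rw [bU_succ ν x hν hx k]
  have h1 : (x/2)^2 ≤ (ν+1)/4 := by nlinarith
  have h2 : (ν + 1) ≤ (((k:ℝ)+1) * ((k:ℝ) + ν + 1)) := by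
    have : (0:ℝ) ≤ (k:ℝ) := Nat.cast_nonneg k
    nlinarith
  have h3 : (0:ℝ) < ((k:ℝ)+1) * ((k:ℝ) + ν + 1) := by
    have : (0:ℝ) ≤ (k:ℝ) := Nat.cast_nonneg k
    nlinarith
  have h4 : (x/2)^2 / (((k:ℝ)+1) * ((k:ℝ) + ν + 1)) ≤ 1/2 := by
    rw [div_le_iff₀ h3]
    nlinarith
  have h5 := bU_nonneg ν x hν (le_of_lt hx) k
  calc bU ν x k * ((x/2)^2 / (((k:ℝ)+1) * ((k:ℝ) + ν + 1))) ≤ bU ν x k * (1/2) :=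
        mul_le_mul_of_nonneg_left h4 h5
    _ = bU ν x k / 2 := by ring

lemma bU_summable (ν x r0 : ℝ) (hν : 0 ≤ ν) (hx : 0 < x) (hxr : x ≤ r0)
    (hbig : r0^2 ≤ ν + 1) : Summable (bU ν x) := by
  have hb : ∀ k, bU ν x k ≤ bU ν x 0 * (1/2)^k := by
    intro k
    induction k with
    | zero => simp
    | succ n ih =>
      calc bU ν x (n+1) ≤ bU ν x n / 2 := bU_half ν x r0 hν hx hxr hbig n
        _ ≤ (bU ν x 0 * (1/2)^n) / 2 := by linarith
        _ = bU ν x 0 * (1/2)^(n+1) := by ring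
  apply Summable.of_nonneg_of_le (bU_nonneg ν x hν (le_of_lt hx)) hb
  exact (summable_geometric_of_lt_one (by norm_num) (by norm_num)).mul_left _

noncomputable def bA (ν x : ℝ) : ℝ := (x/2) ^ ν / Real.Gamma (ν + 1)

lemma bU_zero (ν x : ℝ) : bU ν x 0 = bA ν x := by
  unfold bU bA
  norm_num

lemma bA_pos (ν x : ℝ) (hν : 0 ≤ ν) (hx : 0 < x) : 0 < bA ν x := by
  unfold bA
  have h1 : (0:ℝ) < (x/2) ^ ν := Real.rpow_pos_of_pos (by linarith) _
  have h2 : 0 < Real.Gamma (ν+1) := Real.Gamma_pos_of_pos (by linarith)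
  positivity

lemma besselJ_bounds (ν x r0 : ℝ) (hν : 0 ≤ ν) (hx : 0 < x) (hxr : x ≤ r0)
    (hbig : r0^2 ≤ ν + 1) :
    (3/4) * bA ν x ≤ besselJ ν x ∧ besselJ ν x ≤ bA ν x := by
  have hsum := bU_summable ν x r0 hν hx hxr hbig
  have hpos := bU_nonneg ν x hν (le_of_lt hx)
  have hdec : ∀ k, bU ν x (k+1) ≤ bU ν x k := fun k => by
    have := bU_half ν x r0 hν hx hxr hbig k
    have := hpos k
    linarith
  have h := alt_pair (bU ν x) hpos hdec hsum
  rw [besselJ_eq] at *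
  have hu0 : bU ν x 0 = bA ν x := bU_zero ν x
  have hu1 : bU ν x 1 = bA ν x * ((x/2)^2 / (ν + 1)) := by
    have := bU_succ ν x hν hx 0
    rw [hu0] at this
    simpa using this
  have hε : (x/2)^2 / (ν+1) ≤ 1/4 := by
    have hν1 : (0:ℝ) < ν + 1 := by linarith
    rw [div_le_iff₀ hν1]
    nlinarith
  have hA := bA_pos ν x hν hx
  constructor
  · have := h.1
    rw [hu0, hu1] at this
    nlinarith
  · rw [← hu0]; exact h.2

lemma besselJ_pos (ν x r0 : ℝ) (hν : 0 ≤ ν) (hx : 0 < x) (hxr : x ≤ r0)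
    (hbig : r0^2 ≤ ν + 1) : 0 < besselJ ν x := by
  have h := (besselJ_bounds ν x r0 hν hx hxr hbig).1
  have hA := bA_pos ν x hν hx
  linarith
noncomputable def cden (ν : ℝ) (k : ℕ) : ℝ := (Nat.factorial k : ℝ) * Real.Gamma ((k : ℝ) + ν + 1)

lemma gamma_pos' (ν : ℝ) (hν : 0 ≤ ν) (k : ℕ) : 0 < Real.Gamma ((k : ℝ) + ν + 1) := by
  apply Real.Gamma_pos_of_pos; positivity

lemma cden_pos (ν : ℝ) (hν : 0 ≤ ν) (k : ℕ) : 0 < cden ν k := by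
  unfold cden
  have := gamma_pos' ν hν k
  have : (0:ℝ) < (Nat.factorial k : ℝ) := by exact_mod_cast Nat.factorial_pos k
  positivity

lemma cden_succ (ν : ℝ) (hν : 0 ≤ ν) (k : ℕ) :
    cden ν (k+1) = (((k:ℝ)+1) * ((k:ℝ) + ν + 1)) * cden ν k := by
  unfold cden
  have hne : ((k:ℝ) + ν + 1) ≠ 0 := by positivity
  push_cast
  rw [show ((k:ℝ) + 1 + ν + 1) = ((k:ℝ) + ν + 1) + 1 by ring, Real.Gamma_add_one hne,
    Nat.factorial_succ]
  push_cast
  ring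

lemma rpow_split (ν x y : ℝ) (hν : 0 ≤ ν) (hx : 0 < x) (hy : 0 < y) (k : ℕ) :
    (x/2) ^ (2*(k:ℝ)+ν) * y ^ ν = ((x/2)^2)^k * (x*y/2) ^ ν := by
  have hx2 : (0:ℝ) < x/2 := by linarith
  rw [Real.rpow_add hx2, show (2*(k:ℝ)) = ((2*k : ℕ):ℝ) by push_cast; ring,
    Real.rpow_natCast, pow_mul, mul_assoc, ← Real.mul_rpow hx2.le hy.le,
    show (x/2)*y = x*y/2 by ring]

lemma besselJ_mono (ν r r0 : ℝ) (hν : 0 ≤ ν) (hr : 0 < r) (hrr0 : r ≤ r0)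
    (hbig : r0^2 ≤ ν + 1) :
    besselJ ν r0 * r ^ ν ≤ besselJ ν r * r0 ^ ν := by
  have hr0 : 0 < r0 := lt_of_lt_of_le hr hrr0
  set a := (r/2)^2 with ha
  set b := (r0/2)^2 with hb
  have ha0 : (0:ℝ) ≤ a := sq_nonneg _
  have hb0 : (0:ℝ) ≤ b := sq_nonneg _
  have hab : a ≤ b := by rw [ha, hb]; nlinarith
  have hbν : b ≤ (ν+1)/4 := by rw [hb]; nlinarith
  set C := (r*r0/2) ^ ν with hC
  have hCpos : 0 < C := Real.rpow_pos_of_pos (by positivity) _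
  set w : ℕ → ℝ := fun k => (b^k - a^k) / cden ν k with hw
  have hwpos : ∀ k, 0 ≤ w k := by
    intro k
    apply div_nonneg _ (cden_pos ν hν k).le
    have := pow_le_pow_left₀ ha0 hab k
    linarith
  have hw0 : w 0 = 0 := by simp [hw]
  -- bU as divided form
  have hbU : ∀ (x : ℝ), bU ν x = fun k : ℕ => (x/2) ^ (2*(k:ℝ)+ν) / cden ν k := fun x => rfl
  -- summability of w
  have hgb : Summable (fun k => b^k / cden ν k) := by
    have h1 : (fun k => b^k / cden ν k) = fun k => bU ν r0 k * ((r0/2) ^ ν)⁻¹ := by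
      funext k
      have hsp := rpow_split ν r0 1 hν hr0 one_pos k
      rw [Real.one_rpow, mul_one, show r0*1 = r0 by ring] at hsp
      have e : bU ν r0 k = b^k * (r0/2) ^ ν / cden ν k := by
        show (r0/2) ^ (2*(k:ℝ)+ν) / cden ν k = _
        rw [hsp, hb]
      rw [e]
      have hc := cden_pos ν hν k
      have hrp : (0:ℝ) < (r0/2) ^ ν := Real.rpow_pos_of_pos (by linarith) _
      field_simp
    rw [h1]
    exact (bU_summable ν r0 r0 hν hr0 le_rfl hbig).mul_right _
  have hwsum : Summable w := by
    apply Summable.of_nonneg_of_le hwpos _ hgb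
    intro k
    have := pow_nonneg ha0 k
    have hc := cden_pos ν hν k
    rw [div_le_div_iff₀ hc hc]
    nlinarith [mul_nonneg (pow_nonneg ha0 k) hc.le]
  -- w decreasing from index 1
  have hwdec : ∀ k, w (k+2) ≤ w (k+1) := by
    intro k
    have hc1 := cden_pos ν hν (k+1)
    have hc2 := cden_pos ν hν (k+2)
    have hcs : cden ν (k+2) = ((((k:ℝ)+1)+1) * (((k:ℝ)+1) + ν + 1)) * cden ν (k+1) := by
      have := cden_succ ν hν (k+1)
      push_cast at this ⊢
      convert this using 3 <;> push_cast <;> ring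
    set M := ((((k:ℝ)+1)+1) * (((k:ℝ)+1) + ν + 1)) with hM
    have hM2b : 2*b ≤ M := by
      have hk : (0:ℝ) ≤ (k:ℝ) := Nat.cast_nonneg k
      rw [hM]; nlinarith
    have hkey : b^(k+2) - a^(k+2) ≤ 2*b*(b^(k+1) - a^(k+1)) := by
      have hka : a^k ≤ b^k := pow_le_pow_left₀ ha0 hab k
      have hak : (0:ℝ) ≤ a^k := pow_nonneg ha0 k
      simp only [pow_succ]
      nlinarith [mul_nonneg hb0 (sub_nonneg.2 (mul_le_mul_of_nonneg_left hka hb0)), sq_nonneg (b-a), mul_nonneg (sq_nonneg (b-a)) hak]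
    have hnum : b^(k+2) - a^(k+2) ≤ M * (b^(k+1) - a^(k+1)) := by
      have h1 : a^(k+1) ≤ b^(k+1) := pow_le_pow_left₀ ha0 hab (k+1)
      nlinarith
    rw [hw]
    simp only []
    rw [hcs, div_le_div_iff₀ (by positivity) hc1]
    calc (b^(k+2) - a^(k+2)) * cden ν (k+1) ≤ (M * (b^(k+1) - a^(k+1))) * cden ν (k+1) := by
          apply mul_le_mul_of_nonneg_right hnum hc1.le
      _ = (b^(k+1) - a^(k+1)) * (M * cden ν (k+1)) := by ring
  -- the series rearrangement
  have hsumr : Summable (bU ν r) := bU_summable ν r r0 hν hr hrr0 hbig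
  have hsumr0 : Summable (bU ν r0) := bU_summable ν r0 r0 hν hr0 le_rfl hbig
  have hposr := bU_nonneg ν r hν hr.le
  have hposr0 := bU_nonneg ν r0 hν hr0.le
  have hf : Summable (fun k => ((-1:ℝ)^k * bU ν r k) * r0 ^ ν) :=
    (alt_summable _ hposr hsumr).mul_right _
  have hg : Summable (fun k => ((-1:ℝ)^k * bU ν r0 k) * r ^ ν) :=
    (alt_summable _ hposr0 hsumr0).mul_right _
  have hdiff : ∀ k, ((-1:ℝ)^k * bU ν r k) * r0 ^ ν - ((-1:ℝ)^k * bU ν r0 k) * r ^ ν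
      = -(C * ((-1:ℝ)^k * w k)) := by
    intro k
    have hc := cden_pos ν hν k
    have e1 : bU ν r k * r0 ^ ν = a^k * C / cden ν k := by
      rw [hbU r]
      rw [div_mul_eq_mul_div, rpow_split ν r r0 hν hr hr0 k, ← ha, ← hC]
    have e2 : bU ν r0 k * r ^ ν = b^k * C / cden ν k := by
      rw [hbU r0]
      rw [div_mul_eq_mul_div, rpow_split ν r0 r hν hr0 hr k,
        show r0*r = r*r0 from mul_comm r0 r, ← hb, ← hC]
    rw [mul_assoc, mul_assoc, e1, e2, hw]
    simp only []
    field_simp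
    ring
  have hsub : besselJ ν r * r0 ^ ν - besselJ ν r0 * r ^ ν
      = ∑' k, (((-1:ℝ)^k * bU ν r k) * r0 ^ ν - ((-1:ℝ)^k * bU ν r0 k) * r ^ ν) := by
    rw [Summable.tsum_sub hf hg, besselJ_eq, besselJ_eq, tsum_mul_right, tsum_mul_right]
  -- evaluate the sum
  have haltw : Summable (fun k => (-1:ℝ)^k * w k) := alt_summable w hwpos hwsum
  have hS : (∑' k, (-1:ℝ)^k * w k) ≤ 0 := by
    rw [Summable.tsum_eq_zero_add haltw]
    have h0 : (-1:ℝ)^(0:ℕ) * w 0 = 0 := by rw [hw0]; ring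
    have hshift : (fun k => (-1:ℝ)^(k+1) * w (k+1)) = fun k => -((-1:ℝ)^k * w (k+1)) := by
      funext k; rw [pow_succ]; ring
    rw [h0, hshift, tsum_neg]
    have hw1sum : Summable (fun k => w (k+1)) := (summable_nat_add_iff 1).2 hwsum
    have := (alt_pair (fun k => w (k+1)) (fun k => hwpos (k+1)) (fun k => hwdec k) hw1sum).1
    have hw21 : w 2 ≤ w 1 := hwdec 0
    linarith
  have : besselJ ν r * r0 ^ ν - besselJ ν r0 * r ^ ν = -(C * ∑' k, (-1:ℝ)^k * w k) := by
    rw [hsub, tsum_congr hdiff, tsum_neg, tsum_mul_left]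
  nlinarith

lemma besselJ_zero_eq (ν : ℝ) (hν : 0 < ν) : besselJ ν 0 = 0 := by
  unfold besselJ
  have h : ∀ k : ℕ, ((-1 : ℝ) ^ k / ((Nat.factorial k : ℝ) * Real.Gamma ((k : ℝ) + ν + 1))) *
      ((0:ℝ) / 2) ^ (2 * (k : ℝ) + ν) = 0 := by
    intro k
    rw [zero_div, Real.zero_rpow (by positivity), mul_zero]
  rw [tsum_congr h, tsum_zero]

lemma besselJ_contOn (ν r0 : ℝ) (hν : 0 ≤ ν) (hr0 : 0 < r0) (hbig : r0^2 ≤ ν + 1) :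
    ContinuousOn (besselJ ν) (Set.Icc 0 r0) := by
  have : ContinuousOn (fun x => ∑' k : ℕ,
      ((-1 : ℝ) ^ k / ((Nat.factorial k : ℝ) * Real.Gamma ((k : ℝ) + ν + 1))) *
      (x / 2) ^ (2 * (k : ℝ) + ν)) (Set.Icc 0 r0) := by
    apply continuousOn_tsum (u := bU ν r0)
    · intro k
      apply Continuous.continuousOn
      apply Continuous.mul continuous_const
      rw [continuous_iff_continuousAt]
      intro x
      exact (continuousAt_id.div_const 2).rpow_const (Or.inr (by positivity))
    · exact bU_summable ν r0 r0 hν hr0 le_rfl hbig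
    · intro k x hx
      obtain ⟨hx0, hxr⟩ := hx
      have hc := cden_pos ν hν k
      have hnum : (x/2) ^ (2*(k:ℝ)+ν) ≤ (r0/2) ^ (2*(k:ℝ)+ν) := by
        apply Real.rpow_le_rpow (by linarith) (by linarith) (by positivity)
      have hnn : (0:ℝ) ≤ (x/2) ^ (2*(k:ℝ)+ν) := Real.rpow_nonneg (by linarith) _
      rw [Real.norm_eq_abs, abs_mul, abs_div, abs_pow, abs_neg, abs_one, one_pow,
        abs_of_nonneg hnn, abs_of_pos (show (0:ℝ) < (Nat.factorial k : ℝ) * Real.Gamma ((k : ℝ) + ν + 1) from hc)]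
      unfold bU
      rw [div_mul_eq_mul_div, one_mul]
      unfold cden at hc
      rw [div_le_div_iff₀ hc hc]
      exact mul_le_mul_of_nonneg_right hnum hc.le
  exact this


lemma integral_rpow_zero (p r0 : ℝ) (hp : 0 < p) (hr0 : 0 < r0) :
    ∫ r in (0:ℝ)..r0, r ^ p = r0 ^ (p+1) / (p+1) := by
  rw [integral_rpow (Or.inl (by linarith)), Real.zero_rpow (by positivity)]
  ring

lemma rpow_cont (p : ℝ) (hp : 0 < p) : Continuous (fun r : ℝ => r ^ p) := by
  rw [continuous_iff_continuousAt]
  intro x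
  exact continuousAt_id.rpow_const (Or.inr hp.le)

lemma integral_bounds (ν r0 : ℝ) (hν : (1:ℝ)/2 ≤ ν) (hr0 : 0 < r0) (hbig : r0^2 ≤ ν + 1) :
    besselJ ν r0 ^ 2 * r0 ^ 2 / (2*ν+2) ≤ (∫ r in (0:ℝ)..r0, besselJ ν r ^ 2 * r) ∧
    (∫ r in (0:ℝ)..r0, besselJ ν r ^ 2 * r) ≤ bA ν r0 ^ 2 * r0 ^ 2 / (2*ν+2) := by
  have hν0 : (0:ℝ) ≤ ν := by linarith
  have hνp : (0:ℝ) < ν := by linarith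
  have hp : (0:ℝ) < 2*ν+1 := by linarith
  have hr0ν : (0:ℝ) < r0 ^ ν := Real.rpow_pos_of_pos hr0 _
  have hJ0 : 0 < besselJ ν r0 := besselJ_pos ν r0 r0 hν0 hr0 le_rfl hbig
  have hA0 : 0 < bA ν r0 := bA_pos ν r0 hν0 hr0
  -- continuity facts
  have hcJ : ContinuousOn (fun r => besselJ ν r ^ 2 * r) (Set.Icc 0 r0) :=
    (((besselJ_contOn ν r0 hν0 hr0 hbig).pow 2).mul continuousOn_id)
  have hcP : ∀ c : ℝ, ContinuousOn (fun r : ℝ => c * r ^ (2*ν+1)) (Set.Icc 0 r0) :=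
    fun c => (continuous_const.mul (rpow_cont _ hp)).continuousOn
  have hiJ : IntervalIntegrable (fun r => besselJ ν r ^ 2 * r) MeasureTheory.volume 0 r0 := by
    apply ContinuousOn.intervalIntegrable
    rwa [Set.uIcc_of_le hr0.le]
  have hiP : ∀ c : ℝ, IntervalIntegrable (fun r : ℝ => c * r ^ (2*ν+1)) MeasureTheory.volume 0 r0 := by
    intro c
    apply ContinuousOn.intervalIntegrable
    rw [Set.uIcc_of_le hr0.le]
    exact hcP c
  -- the power integral
  have hPint : ∀ c : ℝ, (∫ r in (0:ℝ)..r0, c * r ^ (2*ν+1)) = c * (r0 ^ (2*ν+2) / (2*ν+2)) := by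
    intro c
    rw [intervalIntegral.integral_const_mul, integral_rpow_zero _ _ hp hr0,
      show (2*ν+1+1) = 2*ν+2 by ring]
  -- square splitting: for r > 0, (r^ν)^2 * r = r^(2ν+1)
  have hsq : ∀ r : ℝ, 0 < r → (r ^ ν) ^ 2 * r = r ^ (2*ν+1) := by
    intro r hr
    nth_rewrite 2 [← Real.rpow_one r]
    rw [sq, ← Real.rpow_add hr, ← Real.rpow_add hr]
    congr 1
    ring
  constructor
  · -- lower bound
    have hmono := fun (r : ℝ) (hr : 0 < r) (hrr : r ≤ r0) => besselJ_mono ν r r0 hν0 hr hrr hbig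
    have hle : ∀ r ∈ Set.Icc (0:ℝ) r0,
        (besselJ ν r0 / r0 ^ ν)^2 * r ^ (2*ν+1) ≤ besselJ ν r ^ 2 * r := by
      intro r hr
      obtain ⟨hr0', hrr⟩ := hr
      rcases eq_or_lt_of_le hr0' with h | h
      · rw [← h, Real.zero_rpow (by positivity)]
        norm_num
      · have hm := hmono r h hrr
        have hrν : (0:ℝ) < r ^ ν := Real.rpow_pos_of_pos h _
        have h1 : (0:ℝ) ≤ besselJ ν r0 * r ^ ν := by positivity
        have hkey : (besselJ ν r0 * r ^ ν)^2 ≤ (besselJ ν r * r0 ^ ν)^2 := by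
          apply sq_le_sq' _ hm
          nlinarith
        rw [← hsq r h, div_pow]
        rw [div_mul_eq_mul_div, div_le_iff₀ (by positivity)]
        nlinarith [mul_le_mul_of_nonneg_right hkey h.le]
    have := intervalIntegral.integral_mono_on hr0.le (hiP _) hiJ hle
    rw [hPint] at this
    have heq : (besselJ ν r0 / r0 ^ ν)^2 * (r0 ^ (2*ν+2) / (2*ν+2))
        = besselJ ν r0 ^ 2 * r0 ^ 2 / (2*ν+2) := by
      have h2 : r0 ^ (2*ν+2) = (r0 ^ ν)^2 * r0 ^ 2 := by
        rw [sq, ← Real.rpow_add hr0, show ((r0:ℝ) ^ (2:ℕ) : ℝ) = r0 ^ ((2:ℕ):ℝ) from (Real.rpow_natCast r0 2).symm, ← Real.rpow_add hr0]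
        congr 1
        push_cast
        ring
      rw [h2, div_pow]
      field_simp
    linarith [heq ▸ this]
  · -- upper bound
    have hle : ∀ r ∈ Set.Icc (0:ℝ) r0,
        besselJ ν r ^ 2 * r ≤ (bA ν r0 / r0 ^ ν)^2 * r ^ (2*ν+1) := by
      intro r hr
      obtain ⟨hr0', hrr⟩ := hr
      rcases eq_or_lt_of_le hr0' with h | h
      · rw [← h, besselJ_zero_eq ν hνp, Real.zero_rpow (by positivity)]
        norm_num
      · have hb := besselJ_bounds ν r r0 hν0 h hrr hbig
        have hJpos := besselJ_pos ν r r0 hν0 h hrr hbig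
        have hrν : (0:ℝ) < r ^ ν := Real.rpow_pos_of_pos h _
        have hAr : bA ν r = bA ν r0 * (r ^ ν / r0 ^ ν) := by
          unfold bA
          have hG : 0 < Real.Gamma (ν+1) := Real.Gamma_pos_of_pos (by linarith)
          have e : (r/2) ^ ν * r0 ^ ν = (r0/2) ^ ν * r ^ ν := by
            rw [← Real.mul_rpow (by linarith) hr0.le, ← Real.mul_rpow (by linarith) h.le,
              show r/2*r0 = r0/2*r by ring]
          field_simp
          nlinarith [e]
        have hJle : besselJ ν r ≤ bA ν r0 * (r ^ ν / r0 ^ ν) := by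
          rw [← hAr]; exact hb.2
        have hkey : besselJ ν r ^ 2 ≤ (bA ν r0 * (r ^ ν / r0 ^ ν))^2 := by
          apply sq_le_sq' _ hJle
          nlinarith
        rw [mul_pow, div_pow] at hkey
        have hP : (0:ℝ) < (r0 ^ ν)^2 := by positivity
        have hkey' : besselJ ν r ^2 * (r0 ^ ν)^2 ≤ bA ν r0 ^2 * (r ^ ν)^2 := by
          have h2 := mul_le_mul_of_nonneg_right hkey hP.le
          calc besselJ ν r ^2 * (r0 ^ ν)^2
              ≤ bA ν r0 ^2 * ((r ^ ν)^2/(r0 ^ ν)^2) * (r0 ^ ν)^2 := h2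
            _ = bA ν r0 ^2 * (r ^ ν)^2 := by field_simp
        rw [← hsq r h, div_pow, div_mul_eq_mul_div, le_div_iff₀ hP]
        nlinarith [mul_le_mul_of_nonneg_right hkey' h.le]
    have := intervalIntegral.integral_mono_on hr0.le hiJ (hiP _) hle
    rw [hPint] at this
    have heq : (bA ν r0 / r0 ^ ν)^2 * (r0 ^ (2*ν+2) / (2*ν+2))
        = bA ν r0 ^ 2 * r0 ^ 2 / (2*ν+2) := by
      have h2 : r0 ^ (2*ν+2) = (r0 ^ ν)^2 * r0 ^ 2 := by
        rw [sq, ← Real.rpow_add hr0, show ((r0:ℝ) ^ (2:ℕ) : ℝ) = r0 ^ ((2:ℕ):ℝ) from (Real.rpow_natCast r0 2).symm, ← Real.rpow_add hr0]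
        congr 1
        push_cast
        ring
      rw [h2, div_pow]
      field_simp
    linarith [heq ▸ this]

theorem exists_M1 (r0 : ℝ) (hr0 : 0 < r0) :
    ∃ M1 : ℕ, ∀ m : ℕ, M1 ≤ m →
      Real.sqrt (2 * (m : ℝ) + 3) * r0 ^ (-(3 / 2) : ℝ) ≥
        r0 ^ (-(1 / 2) : ℝ) * besselJ ((m : ℝ) + 1 / 2) r0 /
          Real.sqrt (∫ r in (0 : ℝ)..r0, besselJ ((m : ℝ) + 1 / 2) r ^ 2 * r) ∧
      r0 ^ (-(1 / 2) : ℝ) * besselJ ((m : ℝ) + 1 / 2) r0 /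
          Real.sqrt (∫ r in (0 : ℝ)..r0, besselJ ((m : ℝ) + 1 / 2) r ^ 2 * r) >
        1 / 2 * (Real.sqrt (2 * (m : ℝ) + 3) * r0 ^ (-(3 / 2) : ℝ)) := by
  refine ⟨⌈r0^2⌉₊, fun m hm => ?_⟩
  have hm' : r0^2 ≤ (m:ℝ) := Nat.ceil_le.1 hm
  set ν : ℝ := (m:ℝ) + 1/2 with hν
  have hν12 : (1:ℝ)/2 ≤ ν := by
    have : (0:ℝ) ≤ (m:ℝ) := Nat.cast_nonneg m
    rw [hν]; linarith
  have hν0 : (0:ℝ) ≤ ν := le_trans (by norm_num) hν12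
  have hbig : r0^2 ≤ ν + 1 := by rw [hν]; linarith
  have hIb := integral_bounds ν r0 hν12 hr0 hbig
  set I := (∫ r in (0:ℝ)..r0, besselJ ν r ^ 2 * r) with hI
  set J0 := besselJ ν r0 with hJ0def
  set A0 := bA ν r0 with hA0def
  have hJ0 : 0 < J0 := besselJ_pos ν r0 r0 hν0 hr0 le_rfl hbig
  have hA0 : 0 < A0 := bA_pos ν r0 hν0 hr0
  have hbnd := besselJ_bounds ν r0 r0 hν0 hr0 le_rfl hbig
  have hJA : J0 ≤ A0 := hbnd.2
  have h34 : 3/4 * A0 ≤ J0 := hbnd.1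
  have h2ν : 2*ν+2 = 2*(m:ℝ)+3 := by rw [hν]; ring
  rw [h2ν] at hIb
  have hm3 : (0:ℝ) < 2*(m:ℝ)+3 := by positivity
  set B := Real.sqrt (2*(m:ℝ)+3) with hBdef
  have hB : 0 < B := Real.sqrt_pos.2 hm3
  have hB2 : B^2 = 2*(m:ℝ)+3 := Real.sq_sqrt hm3.le
  set S := Real.sqrt I with hSdef
  have hSl : J0 * r0 / B ≤ S := by
    rw [hSdef, Real.le_sqrt (by positivity) (le_trans (by positivity) hIb.1)]
    rw [div_pow, mul_pow, hB2]
    exact hIb.1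
  have hSu : S ≤ A0 * r0 / B := by
    have e : A0^2 * r0^2 / (2*(m:ℝ)+3) = (A0*r0/B)^2 := by
      rw [div_pow, mul_pow, hB2]
    have := Real.sqrt_le_sqrt hIb.2
    rwa [e, Real.sqrt_sq (by positivity)] at this
  have hS0 : 0 < S := lt_of_lt_of_le (by positivity) hSl
  set P := r0 ^ (-(1/2) : ℝ) with hPdef
  have hP : 0 < P := Real.rpow_pos_of_pos hr0 _
  have hkey : r0 ^ (-(3/2):ℝ) * r0 = P := by
    rw [hPdef, show (-(1/2):ℝ) = -(3/2)+1 by norm_num, Real.rpow_add hr0, Real.rpow_one]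
  have hQ : 0 < r0 ^ (-(3/2):ℝ) := Real.rpow_pos_of_pos hr0 _
  constructor
  · rw [ge_iff_le, div_le_iff₀ hS0]
    have e2 : B * r0 ^ (-(3/2):ℝ) * (J0*r0/B) = P * J0 := by
      rw [← hkey]; field_simp
    calc P * J0 = B * r0 ^ (-(3/2):ℝ) * (J0*r0/B) := e2.symm
      _ ≤ B * r0 ^ (-(3/2):ℝ) * S := by
          apply mul_le_mul_of_nonneg_left hSl (by positivity)
  · have hstep : (P * (3/4 * A0)) / (A0*r0/B) ≤ P * J0 / S := by
      apply div_le_div₀ (by positivity) _ hS0 hSu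
      have := mul_le_mul_of_nonneg_left h34 hP.le
      linarith
    have e3 : (P * (3/4 * A0)) / (A0*r0/B) = 3/4 * (B * r0 ^ (-(3/2):ℝ)) := by
      rw [← hkey]; field_simp
    rw [e3] at hstep
    have hpos : 0 < B * r0 ^ (-(3/2):ℝ) := by positivity
    calc 1/2 * (B * r0 ^ (-(3/2):ℝ)) < 3/4 * (B * r0 ^ (-(3/2):ℝ)) := by nlinarith
      _ ≤ P * J0 / S := hstep
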